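/- Let x : ℕ → ℂ be the constant sequence x_n = 1 for all n ≥ 0, so that G_x(λ) = 1/(λ − 1) for |λ| > 1. Then the function F : 𝕋∖{1} → ℂ, F(λ) = 1/(λ − 1), belongs to L¹_loc(𝕋∖{1}; ℂ) and is a boundary function for G_x, yet x_n does not tend to 0. (In particular, the hypothesis sup_{n≥0} ‖∑_{k=0}^{n} x_k‖ < ∞ cannot be dropped from the quantified Tauberian theorem.) -/

import Mathlib

open MeasureTheory Filter Set

/-- `Gx x` is the holomorphic function on `{λ : |λ| > 1}` given by
`Gx x λ = ∑_{n ≥ 0} x n / λ^(n+1)`. -/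
noncomputable def Gx {X : Type*} [NormedAddCommGroup X] [NormedSpace ℂ X] (x : ℕ → X)
    (lam : ℂ) : X :=
  ∑' n : ℕ, (lam ^ (n + 1))⁻¹ • x n

/-- `ψ ∈ C₀(−π,π)`: continuous on `[−π,π]`, vanishing in a neighbourhood of `0`,
with `ψ(−π) = ψ(π)`. -/
def IsC0 (ψ : ℝ → ℂ) : Prop :=
  ContinuousOn ψ (Set.Icc (-Real.pi) Real.pi) ∧
    (∃ δ > 0, ∀ θ : ℝ, |θ| < δ → ψ θ = 0) ∧ ψ (-Real.pi) = ψ Real.pi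

/-- `F ∈ L¹_loc(𝕋∖{1}; X)`: for every `ψ ∈ C₀(−π,π)` the map
`θ ↦ ψ(θ) • F(e^{iθ})` is integrable on `(−π, π)`. -/
def MemL1loc {X : Type*} [NormedAddCommGroup X] [NormedSpace ℂ X] (F : ℂ → X) : Prop :=
  ∀ ψ : ℝ → ℂ, IsC0 ψ →
    IntervalIntegrable (fun θ : ℝ => ψ θ • F (Complex.exp (Complex.I * θ)))
      MeasureTheory.volume (-Real.pi) Real.pi

/-- `F` is a boundary function for `Gx x`:
`lim_{r→1+} ∫_{−π}^{π} ψ(θ) Gx x (r e^{iθ}) dθ = ∫_{−π}^{π} ψ(θ) F(e^{iθ}) dθ`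
for every `ψ ∈ C₀(−π,π)`. -/
def IsBoundaryFun {X : Type*} [NormedAddCommGroup X] [NormedSpace ℂ X] [CompleteSpace X]
    (x : ℕ → X) (F : ℂ → X) : Prop :=
  ∀ ψ : ℝ → ℂ, IsC0 ψ →
    Filter.Tendsto
      (fun r : ℝ =>
        ∫ θ in (-Real.pi)..Real.pi, ψ θ • Gx x ((r : ℂ) * Complex.exp (Complex.I * θ)))
      (nhdsWithin 1 (Set.Ioi 1))
      (nhds (∫ θ in (-Real.pi)..Real.pi, ψ θ • F (Complex.exp (Complex.I * θ))))

/-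
For `|λ| > 1` the series defining `G_x` is geometric, so `G_x(λ) = 1/(λ - 1)`.
If `ψ` vanishes on `|θ| < δ`, then on the support of `ψ`
`|r e^{iθ} - 1| ≥ |e^{iθ} - 1| ≥ |e^{iδ} - 1| > 0` for all `r ≥ 1`,
because `|r e^{iθ} - 1|² = (r - 1)² + 2r(1 - cos θ)`. Hence `ψ(θ)/(r e^{iθ} - 1)` is dominated
by a multiple of `|ψ|` uniformly in `r ≥ 1`: this gives `F ∈ L¹_loc` (take `r = 1`) and, by
dominated convergence, the boundary-value property.
-/

section

open Complex Topology

lemma normSq_ofReal_mul_exp_I_mul_sub_one (r θ : ℝ) :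
    normSq (r * exp (I * θ) - 1) = (r - 1) ^ 2 + 2 * r * (1 - Real.cos θ) := by
  rw [mul_comm I, exp_mul_I]
  simp only [normSq_apply, sub_re, mul_re, ofReal_re, add_re, cos_ofReal_re, sin_ofReal_re, I_re,
    mul_zero, sin_ofReal_im, I_im, mul_one, sub_self, add_zero, ofReal_im, add_im, cos_ofReal_im,
    mul_im, zero_add, zero_mul, sub_zero, one_re, sub_im, one_im]
  linear_combination r ^ 2 * Real.sin_sq_add_cos_sq θ

lemma normSq_exp_I_mul_sub_one (θ : ℝ) : normSq (exp (I * θ) - 1) = 2 * (1 - Real.cos θ) := by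
  simpa using normSq_ofReal_mul_exp_I_mul_sub_one 1 θ

lemma norm_exp_I_mul_sub_one_le_norm_ofReal_mul_exp_I_mul_sub_one {r : ℝ} (hr : 1 ≤ r) (θ : ℝ) :
    ‖exp (I * θ) - 1‖ ≤ ‖r * exp (I * θ) - 1‖ := by
  rw [norm_def, norm_def, normSq_exp_I_mul_sub_one, normSq_ofReal_mul_exp_I_mul_sub_one]
  gcongr
  nlinarith [Real.cos_le_one θ]

lemma norm_exp_I_mul_sub_one_le_of_le_abs {δ θ : ℝ} (hδ : 0 ≤ δ) (hδθ : δ ≤ |θ|)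
    (hθ : |θ| ≤ Real.pi) : ‖exp (I * δ) - 1‖ ≤ ‖exp (I * θ) - 1‖ := by
  rw [norm_def, norm_def, normSq_exp_I_mul_sub_one, normSq_exp_I_mul_sub_one, ← Real.cos_abs θ]
  gcongr
  exact Real.cos_le_cos_of_nonneg_of_le_pi hδ hθ hδθ

lemma exp_I_mul_ne_one {θ : ℝ} (h0 : θ ≠ 0) (hθ : |θ| ≤ Real.pi) : exp (I * θ) ≠ 1 := by
  intro h
  have hcos : Real.cos θ = 1 := by
    have := normSq_exp_I_mul_sub_one θ
    rw [h, sub_self, map_zero] at this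
    linarith
  obtain ⟨hθl, hθr⟩ := abs_le.1 hθ
  exact h0 ((Real.cos_eq_one_iff_of_lt_of_lt (by linarith [Real.pi_pos])
    (by linarith [Real.pi_pos])).1 hcos)

lemma norm_ofReal_mul_exp_I_mul (r θ : ℝ) : ‖(r : ℂ) * exp (I * θ)‖ = |r| := by
  rw [norm_mul, norm_real, Real.norm_eq_abs, norm_exp_I_mul_ofReal, mul_one]

lemma hasSum_inv_pow_succ {lam : ℂ} (h : 1 < ‖lam‖) :
    HasSum (fun n : ℕ => (lam ^ (n + 1))⁻¹) (lam - 1)⁻¹ := by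
  have hlam : lam ≠ 0 := norm_pos_iff.1 (one_pos.trans h)
  have hinv : ‖lam⁻¹‖ < 1 := by rwa [norm_inv, inv_lt_one₀ (one_pos.trans h)]
  have hterm : (fun n : ℕ => (lam ^ (n + 1))⁻¹) = fun n => lam⁻¹ * lam⁻¹ ^ n := by
    ext n
    rw [pow_succ', mul_inv, inv_pow]
  have hval : lam⁻¹ * (1 - lam⁻¹)⁻¹ = (lam - 1)⁻¹ := by
    rw [← mul_inv, mul_sub, mul_one, mul_inv_cancel₀ hlam]
  rw [hterm, ← hval]
  exact (hasSum_geometric_of_norm_lt_one hinv).mul_left lam⁻¹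

lemma Gx_const {X : Type*} [NormedAddCommGroup X] [NormedSpace ℂ X] (v : X) {lam : ℂ}
    (h : 1 < ‖lam‖) : Gx (fun _ : ℕ => v) lam = (lam - 1)⁻¹ • v :=
  ((hasSum_inv_pow_succ h).smul_const v).tsum_eq

lemma Gx_const_one {lam : ℂ} (h : 1 < ‖lam‖) : Gx (fun _ : ℕ => (1 : ℂ)) lam = (lam - 1)⁻¹ := by
  simpa using Gx_const (1 : ℂ) h

namespace IsC0

variable {ψ : ℝ → ℂ}

lemma apply_zero (hψ : IsC0 ψ) : ψ 0 = 0 := by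
  obtain ⟨δ, hδ, hvan⟩ := hψ.2.1
  exact hvan 0 (by simpa using hδ)

lemma ne_zero_of_apply_ne_zero (hψ : IsC0 ψ) {θ : ℝ} (h : ψ θ ≠ 0) : θ ≠ 0 := by
  rintro rfl
  exact h hψ.apply_zero

lemma integrableOn_norm (hψ : IsC0 ψ) :
    IntegrableOn (fun θ => ‖ψ θ‖) (Ioc (-Real.pi) Real.pi) :=
  hψ.1.norm.integrableOn_Icc.mono_set Ioc_subset_Icc_self

lemma aestronglyMeasurable_smul_inv (hψ : IsC0 ψ) (r : ℝ) :
    AEStronglyMeasurable (fun θ : ℝ => ψ θ • ((r : ℂ) * exp (I * θ) - 1)⁻¹)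
      (volume.restrict (Ioc (-Real.pi) Real.pi)) :=
  ((hψ.1.mono Ioc_subset_Icc_self).aestronglyMeasurable measurableSet_Ioc).smul
    (by fun_prop : Measurable fun θ : ℝ => ((r : ℂ) * exp (I * θ) - 1)⁻¹).aestronglyMeasurable

lemma exists_norm_smul_inv_le (hψ : IsC0 ψ) :
    ∃ C : ℝ, ∀ r : ℝ, 1 ≤ r → ∀ θ : ℝ, |θ| ≤ Real.pi →
      ‖ψ θ • ((r : ℂ) * exp (I * θ) - 1)⁻¹‖ ≤ ‖ψ θ‖ * C := by
  obtain ⟨δ₀, hδ₀, hvan⟩ := hψ.2.1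
  set δ := min δ₀ Real.pi
  have hδ : 0 < δ := lt_min hδ₀ Real.pi_pos
  have hc : 0 < ‖exp (I * δ) - 1‖ :=
    norm_pos_iff.2 (sub_ne_zero.2 (exp_I_mul_ne_one hδ.ne' (by
      rw [abs_of_pos hδ]; exact min_le_right _ _)))
  refine ⟨‖exp (I * δ) - 1‖⁻¹, fun r hr θ hθ => ?_⟩
  rcases lt_or_ge |θ| δ with hlt | hge
  · simp [hvan θ (hlt.trans_le (min_le_left _ _))]
  · rw [norm_smul, norm_inv]
    gcongr
    exact (norm_exp_I_mul_sub_one_le_of_le_abs hδ.le hge hθ).trans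
      (norm_exp_I_mul_sub_one_le_norm_ofReal_mul_exp_I_mul_sub_one hr θ)

lemma intervalIntegrable_smul_inv (hψ : IsC0 ψ) :
    IntervalIntegrable (fun θ : ℝ => ψ θ • (exp (I * θ) - 1)⁻¹) volume (-Real.pi) Real.pi := by
  obtain ⟨C, hC⟩ := hψ.exists_norm_smul_inv_le
  rw [intervalIntegrable_iff_integrableOn_Ioc_of_le (by linarith [Real.pi_pos])]
  refine (hψ.integrableOn_norm.mul_const C).mono'
    (by simpa using hψ.aestronglyMeasurable_smul_inv 1) ?_
  refine (ae_restrict_iff' measurableSet_Ioc).2 (Eventually.of_forall fun θ hθ => ?_)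
  simpa using hC 1 le_rfl θ (abs_le.2 ⟨hθ.1.le, hθ.2⟩)

lemma tendsto_integral_smul_inv (hψ : IsC0 ψ) :
    Tendsto (fun r : ℝ => ∫ θ in (-Real.pi)..Real.pi, ψ θ • ((r : ℂ) * exp (I * θ) - 1)⁻¹)
      (𝓝[>] 1) (𝓝 (∫ θ in (-Real.pi)..Real.pi, ψ θ • (exp (I * θ) - 1)⁻¹)) := by
  obtain ⟨C, hC⟩ := hψ.exists_norm_smul_inv_le
  have hpi : -Real.pi ≤ Real.pi := by linarith [Real.pi_pos]
  refine intervalIntegral.tendsto_integral_filter_of_dominated_convergence (fun θ => ‖ψ θ‖ * C)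
    (Eventually.of_forall fun r => by
      simpa [uIoc_of_le hpi] using hψ.aestronglyMeasurable_smul_inv r) ?_ ?_ ?_
  · filter_upwards [self_mem_nhdsWithin] with r (hr : 1 < r)
    refine Eventually.of_forall fun θ hθ => hC r hr.le θ ?_
    rw [uIoc_of_le hpi] at hθ
    exact abs_le.2 ⟨hθ.1.le, hθ.2⟩
  · rw [intervalIntegrable_iff_integrableOn_Ioc_of_le hpi]
    exact hψ.integrableOn_norm.mul_const C
  · refine Eventually.of_forall fun θ hθ => ?_
    rw [uIoc_of_le hpi] at hθ
    by_cases hψθ : ψ θ = 0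
    · simp [hψθ]
    have hne : ((1 : ℝ) : ℂ) * exp (I * θ) - 1 ≠ 0 := by
      simpa [sub_eq_zero] using
        exp_I_mul_ne_one (hψ.ne_zero_of_apply_ne_zero hψθ) (abs_le.2 ⟨hθ.1.le, hθ.2⟩)
    have hcont : ContinuousAt (fun r : ℝ => ψ θ • ((r : ℂ) * exp (I * θ) - 1)⁻¹) 1 :=
      ((by fun_prop : Continuous fun r : ℝ => (r : ℂ) * exp (I * θ) - 1).continuousAt.inv₀
        hne).const_smul (ψ θ)
    simpa using hcont.tendsto.mono_left nhdsWithin_le_nhds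

end IsC0

end

theorem stmt_8 :
    (∀ lam : ℂ, 1 < ‖lam‖ → Gx (fun _ : ℕ => (1 : ℂ)) lam = (lam - 1)⁻¹) ∧
    MemL1loc (fun lam : ℂ => (lam - 1)⁻¹) ∧
    IsBoundaryFun (fun _ : ℕ => (1 : ℂ)) (fun lam : ℂ => (lam - 1)⁻¹) ∧
    ¬ Filter.Tendsto (fun _ : ℕ => (1 : ℂ)) Filter.atTop (nhds 0) := by
  refine ⟨fun _ => Gx_const_one, fun _ hψ => hψ.intervalIntegrable_smul_inv,
    fun ψ (hψ : IsC0 ψ) => ?_, fun h => one_ne_zero (tendsto_const_nhds_iff.1 h)⟩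
  refine hψ.tendsto_integral_smul_inv.congr' ?_
  filter_upwards [self_mem_nhdsWithin] with r (hr : 1 < r)
  refine intervalIntegral.integral_congr fun θ _ => ?_
  have hnorm : 1 < ‖(r : ℂ) * Complex.exp (Complex.I * θ)‖ := by
    rwa [norm_ofReal_mul_exp_I_mul, abs_of_pos (one_pos.trans hr)]
  rw [Gx_const_one hnorm]
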